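/- arXiv:0909.4899 — 3 statements merged into one kernel-verified Lean document; each statement's English description precedes it below -/
import Mathlib

section
/- Let J : ℂⁿ → ℂⁿ be an ℝ-linear map with det(J_st + J) ≠ 0, where J_st is multiplication by i. Define Q = (J_st + J)⁻¹ ∘ (J_st - J). Then J² = -I if and only if Q ∘ J_st + J_st ∘ Q = 0, i.e., Q is complex anti-linear. -/
open Complex

lemma half_cancel {R : Type*} [Ring R] [Algebra ℝ R] (x : R) (h : x + x = 0) : x = 0 := by
  have h2 : (2:ℝ) • x = 0 := by rw [two_smul]; exact h
  have := congrArg (fun y => ((2:ℝ)⁻¹) • y) h2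
  simpa [smul_smul] using this

lemma key {R : Type*} [Ring R] [Algebra ℝ R] (k j v : R)
    (hk : k * k = -1) (hva : v * (k + j) = 1) (hav : (k + j) * v = 1) :
    (j * j = -1) ↔ (v * (k - j)) * k + k * (v * (k - j)) = 0 := by
  set a := k + j with ha
  set s := k - j with hs
  have h2k : a + s = 2 * k := by rw [ha, hs]; noncomm_ring
  have h1 : a * s + s * a = 2 * (k * k) - 2 * (j * j) := by rw [ha, hs]; noncomm_ring
  constructor
  · intro hj
    have h0 : a * s + s * a = 0 := by rw [h1, hk, hj]; noncomm_ring
    have has : a * s = -(s * a) := eq_neg_of_add_eq_zero_left h0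
    have e1 : v * s * a = -s := by
      calc v * s * a = v * (s * a) := by rw [mul_assoc]
        _ = v * (-(a * s)) := by rw [← neg_eq_of_add_eq_zero_right h0]
        _ = -(v * a * s) := by rw [mul_neg, mul_assoc]
        _ = -s := by rw [hva, one_mul]
    have e3 : a * (v * s) = s := by rw [← mul_assoc, hav, one_mul]
    have e2 : s * (v * s) = -(v * s * s) := by
      have hsv : s * v = -(v * s) := by
        have hasv : a * s * v = -s := by
          rw [has]; rw [neg_mul, mul_assoc, hav, mul_one]
        calc s * v = v * (a * s * v) := by
              rw [← mul_assoc, ← mul_assoc, hva, one_mul]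
          _ = v * (-s) := by rw [hasv]
          _ = -(v * s) := by rw [mul_neg]
      rw [← mul_assoc, hsv]; noncomm_ring
    apply half_cancel
    have expand : (v * s * k + k * (v * s)) + (v * s * k + k * (v * s))
        = v * s * (a + s) + ((a + s) * (v * s)) := by rw [h2k]; noncomm_ring
    rw [expand]
    calc v * s * (a + s) + ((a + s) * (v * s))
        = (v * s * a) + v * s * s + (a * (v * s) + s * (v * s)) := by noncomm_ring
      _ = (-s) + v * s * s + (s + -(v * s * s)) := by rw [e1, e3, e2]
      _ = 0 := by noncomm_ring
  · intro hC
    have hkq : k * (v * s) * k = v * s := by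
      have h := eq_neg_of_add_eq_zero_right hC
      calc k * (v * s) * k = (-(v * s * k)) * k := by rw [← h]
        _ = -(v * s * (k * k)) := by rw [neg_mul, mul_assoc, mul_assoc]
        _ = v * s := by rw [hk]; noncomm_ring
    have ha_kq : a * (k * (v * s) * k) = s := by rw [hkq, ← mul_assoc, hav, one_mul]
    have h3 : (a * s) * k = ((a * s) * v) * (a * k) := by
      calc (a * s) * k = (a * s) * ((v * a) * k) := by rw [hva, one_mul]
        _ = ((a * s) * v) * (a * k) := by noncomm_ring
    have big : (2 : R) * (a * (k * (v * s) * k)) = -((2:R) * ((a * s) * v)) := by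
      calc (2 : R) * (a * (k * (v * s) * k))
          = a * (((2:R) * k) * ((v * s) * k)) := by noncomm_ring
        _ = a * ((a + s) * ((v * s) * k)) := by rw [← h2k]
        _ = (a * (a * v)) * (s * k) + (a * (s * v)) * (s * k) := by noncomm_ring
        _ = a * (s * k) + (a * (s * v)) * (s * k) := by rw [hav, mul_one]
        _ = (a * s) * k + ((a * s) * v) * (s * k) := by noncomm_ring
        _ = ((a * s) * v) * (a * k) + ((a * s) * v) * (s * k) := by rw [h3]
        _ = ((a * s) * v) * ((a + s) * k) := by noncomm_ring
        _ = ((a * s) * v) * (((2:R) * k) * k) := by rw [h2k]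
        _ = (2:R) * (((a * s) * v) * (k * k)) := by noncomm_ring
        _ = -((2:R) * ((a * s) * v)) := by rw [hk]; noncomm_ring
    rw [ha_kq] at big
    have hsum : (s + (a * s) * v) + (s + (a * s) * v) = 0 := by
      have e : (s + (a * s) * v) + (s + (a * s) * v)
          = (2:R) * s + (2:R) * ((a * s) * v) := by noncomm_ring
      rw [e, big]; noncomm_ring
    have hasv : (a * s) * v = -s := eq_neg_of_add_eq_zero_right (half_cancel _ hsum)
    have has : a * s = -(s * a) := by
      calc a * s = (a * s) * (v * a) := by rw [hva, mul_one]
        _ = ((a * s) * v) * a := by rw [← mul_assoc]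
        _ = (-s) * a := by rw [hasv]
        _ = -(s * a) := by rw [neg_mul]
    have h0 : (2:R) * (k * k) - 2 * (j * j) = 0 := by rw [← h1, has]; simp
    rw [hk] at h0
    have hjj : (j * j + 1) + (j * j + 1) = 0 := by
      have e : (j * j + 1) + (j * j + 1) = -((2:R) * (-1) - 2 * (j * j)) := by noncomm_ring
      rw [e, h0, neg_zero]
    have := half_cancel _ hjj
    exact eq_neg_of_add_eq_zero_left this

/-- The standard complex structure `v ↦ i v` on `ℂⁿ`, as an `ℝ`-linear map. -/
noncomputable def Jstd (n : ℕ) : (Fin n → ℂ) →ₗ[ℝ] (Fin n → ℂ) where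
  toFun v := Complex.I • v
  map_add' := by intro x y; simp [smul_add]
  map_smul' := by intro r x; simp [smul_comm r Complex.I x]

/-- for an `ℝ`-linear `J` on `ℂⁿ` with `J_st + J` invertible,
`J² = -I` iff `Q = (J_st + J)⁻¹ (J_st - J)` is complex anti-linear, i.e.
`Q J_st + J_st Q = 0`. -/
theorem stmt0 (n : ℕ) (J Jinv : (Fin n → ℂ) →ₗ[ℝ] (Fin n → ℂ))
    (hdet : LinearMap.det (Jstd n + J) ≠ 0)
    (hleft : Jinv ∘ₗ (Jstd n + J) = LinearMap.id)
    (hright : (Jstd n + J) ∘ₗ Jinv = LinearMap.id) :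
    (J ∘ₗ J = -LinearMap.id) ↔
      (Jinv ∘ₗ (Jstd n - J)) ∘ₗ Jstd n + Jstd n ∘ₗ (Jinv ∘ₗ (Jstd n - J)) = 0 := by
  have hk : (Jstd n) * (Jstd n) = -1 := by
    apply LinearMap.ext
    intro x
    show Complex.I • (Complex.I • x) = -x
    rw [smul_smul, Complex.I_mul_I, neg_one_smul]
  have hva : Jinv * (Jstd n + J) = 1 := hleft
  have hav : (Jstd n + J) * Jinv = 1 := hright
  simpa [Module.End.mul_eq_comp, Module.End.one_eq_id] using
    key (Jstd n) J Jinv hk hva hav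
end

section
/- Let A be a complex n×n matrix with det(I - A·conj(A)) ≠ 0, and define the ℝ-linear map J on ℂⁿ by Ju = i(I - A·conj(A))⁻¹[(I + A·conj(A))u - 2A·conj(u)]. Then J² = -I. -/
open Complex Matrix

/-- Entrywise complex conjugate of a matrix. -/
def matConj {n : ℕ} (A : Matrix (Fin n) (Fin n) ℂ) : Matrix (Fin n) (Fin n) ℂ :=
  A.map (starRingEnd ℂ)

/-- Componentwise complex conjugate of a vector in `ℂⁿ`. -/
def vecConj {n : ℕ} (u : Fin n → ℂ) : Fin n → ℂ := fun j => (starRingEnd ℂ) (u j)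

lemma matConj_mul {n : ℕ} (M N : Matrix (Fin n) (Fin n) ℂ) :
    matConj (M * N) = matConj M * matConj N := by
  simp [matConj, Matrix.map_mul]

lemma matConj_one {n : ℕ} : matConj (1 : Matrix (Fin n) (Fin n) ℂ) = 1 := by
  simp [matConj]

lemma matConj_sub {n : ℕ} (M N : Matrix (Fin n) (Fin n) ℂ) :
    matConj (M - N) = matConj M - matConj N := by
  ext i j; simp [matConj]

lemma matConj_add {n : ℕ} (M N : Matrix (Fin n) (Fin n) ℂ) :
    matConj (M + N) = matConj M + matConj N := by
  ext i j; simp [matConj]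

lemma matConj_matConj {n : ℕ} (M : Matrix (Fin n) (Fin n) ℂ) :
    matConj (matConj M) = M := by
  ext i j; simp [matConj]

lemma vecConj_sub {n : ℕ} (x y : Fin n → ℂ) : vecConj (x - y) = vecConj x - vecConj y := by
  funext j; simp [vecConj]

lemma vecConj_smul {n : ℕ} (c : ℂ) (x : Fin n → ℂ) :
    vecConj (c • x) = (starRingEnd ℂ c) • vecConj x := by
  funext j; simp [vecConj]

lemma vecConj_vecConj {n : ℕ} (x : Fin n → ℂ) : vecConj (vecConj x) = x := by
  funext j; simp [vecConj]

lemma vecConj_mulVec {n : ℕ} (M : Matrix (Fin n) (Fin n) ℂ) (x : Fin n → ℂ) :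
    vecConj (M *ᵥ x) = matConj M *ᵥ vecConj x := by
  funext j; simp [vecConj, matConj, Matrix.mulVec, dotProduct, map_sum]

set_option maxHeartbeats 1000000 in
/-- if `det(I - A·conj A) ≠ 0` then the `ℝ`-linear map
`J u = i (I - A conj A)⁻¹ [(I + A conj A) u - 2 A conj u]` satisfies `J² = -I`. -/
theorem stmt1 (n : ℕ) (A : Matrix (Fin n) (Fin n) ℂ)
    (hdet : (1 - A * matConj A).det ≠ 0)
    (J : (Fin n → ℂ) → (Fin n → ℂ))
    (hJ : ∀ u, J u = Complex.I •
      ((1 - A * matConj A)⁻¹ *ᵥ ((1 + A * matConj A) *ᵥ u - (2 : ℂ) • (A *ᵥ vecConj u)))) :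
    ∀ u, J (J u) = -u := by
  intro u
  set B := A * matConj A with hB
  set C := matConj A * A with hC
  set M := (1 : Matrix (Fin n) (Fin n) ℂ) - B with hM
  set N := (1 : Matrix (Fin n) (Fin n) ℂ) - C with hN
  have hMc : matConj M = N := by
    rw [hM, matConj_sub, matConj_one, hB, matConj_mul, matConj_matConj, ← hC, ← hN]
  have hMunit : IsUnit M.det := isUnit_iff_ne_zero.mpr hdet
  have hMM : M * M⁻¹ = 1 := Matrix.mul_nonsing_inv M hMunit
  have hMM' : M⁻¹ * M = 1 := Matrix.nonsing_inv_mul M hMunit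
  have hNdet : N.det ≠ 0 := by
    have h : N.det = starRingEnd ℂ M.det := by
      rw [← hMc]; exact ((RingHom.map_det (starRingEnd ℂ) M).symm)
    rw [h]; simpa using hdet
  have hNunit : IsUnit N.det := isUnit_iff_ne_zero.mpr hNdet
  have hNN : N * N⁻¹ = 1 := Matrix.mul_nonsing_inv N hNunit
  have hNN' : N⁻¹ * N = 1 := Matrix.nonsing_inv_mul N hNunit
  have hMinvc : matConj M⁻¹ = N⁻¹ := by
    refine (Matrix.inv_eq_right_inv ?_).symm
    rw [← hMc, ← matConj_mul, hMM, matConj_one]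
  have hBc : matConj (1 + B) = 1 + C := by
    rw [matConj_add, matConj_one, hB, matConj_mul, matConj_matConj, ← hC]
  have hAN : A * N = M * A := by
    rw [hM, hN, hB, hC]; noncomm_ring
  have hANi : A * N⁻¹ = M⁻¹ * A := by
    calc A * N⁻¹ = M⁻¹ * M * (A * N⁻¹) := by rw [hMM', one_mul]
    _ = M⁻¹ * (A * N) * N⁻¹ := by rw [hAN]; noncomm_ring
    _ = M⁻¹ * A * (N * N⁻¹) := by noncomm_ring
    _ = M⁻¹ * A := by rw [hNN, mul_one]
  have hcomm : M⁻¹ * (1 + B) = (1 + B) * M⁻¹ := by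
    have h1 : (1 + B) * M = M * (1 + B) := by rw [hM]; noncomm_ring
    calc M⁻¹ * (1 + B) = M⁻¹ * (1 + B) * (M * M⁻¹) := by rw [hMM, mul_one]
    _ = M⁻¹ * ((1 + B) * M) * M⁻¹ := by noncomm_ring
    _ = M⁻¹ * (M * (1 + B)) * M⁻¹ := by rw [h1]
    _ = (M⁻¹ * M) * ((1 + B) * M⁻¹) := by noncomm_ring
    _ = (1 + B) * M⁻¹ := by rw [hMM', one_mul]
  -- key matrix identities
  have L1 : M⁻¹ * ((1 + B) * (M⁻¹ * (1 + B))) - (4 : ℂ) • (M⁻¹ * (A * (N⁻¹ * matConj A))) = 1 := by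
    have h4 : M⁻¹ * (A * (N⁻¹ * matConj A)) = M⁻¹ * (M⁻¹ * B) := by
      rw [← mul_assoc A, hANi, hB]; noncomm_ring
    have h5 : M⁻¹ * ((1 + B) * (M⁻¹ * (1 + B))) = M⁻¹ * (M⁻¹ * ((1 + B) * (1 + B))) := by
      rw [← mul_assoc (1+B) M⁻¹ (1+B), ← hcomm, mul_assoc]
    have key : (1 + B) * (1 + B) - (4 : ℂ) • B = M * M := by
      have h4B : (4:ℂ) • B = B + B + B + B := by
        rw [show (4:ℂ) = 3+1 by norm_num, add_smul, one_smul,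
          show (3:ℂ) = 2+1 by norm_num, add_smul, one_smul,
          show (2:ℂ) = 1+1 by norm_num, add_smul, one_smul]
      rw [h4B, hM]; noncomm_ring
    rw [h4, h5, ← Matrix.mul_smul, ← Matrix.mul_smul, ← mul_sub, ← mul_sub, key,
      ← mul_assoc M⁻¹ M, hMM', one_mul, hMM']
  have L2 : M⁻¹ * ((1 + B) * (M⁻¹ * A)) = M⁻¹ * (A * (N⁻¹ * (1 + C))) := by
    have h1 : N⁻¹ * (1 + C) = (1 + C) * N⁻¹ := by
      have h1' : (1 + C) * N = N * (1 + C) := by rw [hN]; noncomm_ring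
      calc N⁻¹ * (1 + C) = N⁻¹ * (1 + C) * (N * N⁻¹) := by rw [hNN, mul_one]
      _ = N⁻¹ * ((1 + C) * N) * N⁻¹ := by noncomm_ring
      _ = N⁻¹ * (N * (1 + C)) * N⁻¹ := by rw [h1']
      _ = (N⁻¹ * N) * ((1 + C) * N⁻¹) := by noncomm_ring
      _ = (1 + C) * N⁻¹ := by rw [hNN']; try rw [one_mul]
    have h2 : A * (1 + C) = (1 + B) * A := by rw [hB, hC]; noncomm_ring
    rw [h1, ← mul_assoc A, h2, mul_assoc (1+B), hANi]
  -- vector computation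
  rw [hJ, hJ u]
  simp only [vecConj_smul, vecConj_sub, vecConj_mulVec, matConj_mul, hMinvc, hBc, Complex.conj_I,
    vecConj_vecConj, Matrix.mulVec_smul, Matrix.mulVec_sub, Matrix.mulVec_add, smul_sub, smul_smul,
    Matrix.mulVec_mulVec, Complex.I_mul_I, neg_smul, one_smul, neg_neg, sub_neg_eq_add]
  have e1 : Complex.I * (Complex.I * 2) = -2 := by
    rw [← mul_assoc, Complex.I_mul_I]; ring
  have e2 : Complex.I * (2 * (starRingEnd ℂ) (Complex.I * 2)) = 4 := by
    simp only [_root_.map_mul, Complex.conj_I, map_ofNat]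
    rw [show Complex.I * (2 * (-Complex.I * 2)) = -(Complex.I*Complex.I)*4 by ring,
      Complex.I_mul_I]; ring
  have e3 : Complex.I * 2 * Complex.I = -2 := by
    rw [show Complex.I * 2 * Complex.I = Complex.I*Complex.I*2 by ring, Complex.I_mul_I]; ring
  have hP1 : (M⁻¹ * ((1 + B) * (M⁻¹ * (1 + B)))) *ᵥ u
      = u + (4:ℂ) • ((M⁻¹ * (A * (N⁻¹ * matConj A))) *ᵥ u) := by
    rw [eq_add_of_sub_eq' L1]
    simp [Matrix.add_mulVec, Matrix.smul_mulVec, add_comm]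
  have hP2 : (M⁻¹ * ((1 + B) * (M⁻¹ * A))) *ᵥ vecConj u
      = (M⁻¹ * A) *ᵥ ((N⁻¹ * (1 + C)) *ᵥ vecConj u) := by
    rw [L2, Matrix.mulVec_mulVec, mul_assoc]
  simp only [Matrix.mulVec_neg, Matrix.mulVec_smul, smul_neg, smul_smul]
  rw [e1, e2, e3, hP1, hP2]
  module
end

section
/- Let A : ℂ → Mat(n,ℂ) be the complex matrix of an almost complex structure J on a domain Ω ⊆ ℂⁿ, and let z : D → Ω be a differentiable map on the unit disc D ⊂ ℂ. Then z satisfies dz ∘ J_st = J(z) ∘ dz (i.e., z is J-holomorphic) if and only if ∂z/∂ζ̄ = A(z)·∂(conj z)/∂ζ̄ on D. -/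
open Complex Matrix

/-- The Wirtinger derivative `∂f/∂ζ̄ = (∂f/∂ξ + i ∂f/∂η)/2` of a map `ℂ → ℂⁿ`. -/
noncomputable def dbar {n : ℕ} (f : ℂ → (Fin n → ℂ)) (ζ : ℂ) : Fin n → ℂ :=
  (1 / 2 : ℂ) • (fderiv ℝ f ζ 1 + Complex.I • fderiv ℝ f ζ Complex.I)

/-!
At a point `ζ` put `X = dz(1)` and `Y = dz(i)`. The equation `z_ζ̄ = A(z) conj(z)_ζ̄` reads
`X + iY = A conj(X - iY)`; applying the injective map `i + J` and the defining relation of `A`,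
it is equivalent to `Y = J X`. The equation is invariant under `(X, Y) ↦ (Y, -X)`, i.e. under
precomposing `dz` with multiplication by `i`, so it equally gives `-X = J Y`. These two identities
say that `dz ∘ J_st = J ∘ dz` on the real basis `{1, i}` of `ℂ`.
-/

theorem forall_apply_I_mul_iff {V : Type*} [AddCommGroup V] [Module ℝ V] (J : V →ₗ[ℝ] V)
    (L : ℂ →ₗ[ℝ] V) : (∀ w, L (I * w) = J (L w)) ↔ L I = J (L 1) ∧ -L 1 = J (L I) := by
  refine ⟨fun h => ⟨by simpa using h 1, by simpa using h I⟩, fun ⟨h1, hI⟩ w => ?_⟩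
  have hext := Complex.basisOneI.ext (f₁ := L ∘ₗ LinearMap.mulLeft ℝ I) (f₂ := J ∘ₗ L) (by
    intro i; fin_cases i <;> simp [h1, hI])
  exact LinearMap.congr_fun hext w

theorem eq_apply_iff_add_I_smul_eq {V : Type*} [AddCommGroup V] [Module ℂ V] [Module ℝ V]
    (J : V →ₗ[ℝ] V) (hinj : Function.Injective fun t => I • t + J t)
    {X Y u : V} (hu : I • u + J u = I • (X - I • Y) - J (X - I • Y)) :
    Y = J X ↔ X + I • Y = u := by
  rw [map_sub] at hu
  constructor
  · rintro rfl
    refine hinj ?_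
    simp only [hu, map_add, smul_sub, smul_add, smul_smul, I_mul_I, neg_one_smul]
    abel
  · rintro rfl
    rw [map_add] at hu
    simp only [smul_sub, smul_add, smul_smul, I_mul_I, neg_one_smul] at hu
    have h2 : (2 : ℂ) • Y = (2 : ℂ) • J X := by
      linear_combination (norm := module) -hu
    exact smul_right_injective V two_ne_zero h2

section

variable {n : ℕ}

theorem vecConj_I_smul (v : Fin n → ℂ) : vecConj (I • v) = -I • vecConj v := by
  funext j; simp [vecConj]

theorem add_I_smul_eq_mulVec_vecConj_rotate (A : Matrix (Fin n) (Fin n) ℂ) (X Y : Fin n → ℂ) :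
    Y + I • -X = A *ᵥ vecConj (Y - I • -X) ↔ X + I • Y = A *ᵥ vecConj (X - I • Y) := by
  have hl : Y + I • -X = -I • (X + I • Y) := by
    simp only [smul_add, smul_smul, neg_mul, I_mul_I, neg_neg, one_smul, neg_smul, smul_neg]; abel
  have hr : Y - I • -X = I • (X - I • Y) := by
    simp only [smul_sub, smul_smul, I_mul_I, neg_smul, one_smul, smul_neg]; abel
  rw [hl, hr, vecConj_I_smul, mulVec_smul, smul_right_inj (neg_ne_zero.2 I_ne_zero)]

theorem forall_apply_I_mul_iff_add_I_smul_eq (J : (Fin n → ℂ) →ₗ[ℝ] (Fin n → ℂ))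
    (hinj : Function.Injective fun t => I • t + J t) (A : Matrix (Fin n) (Fin n) ℂ)
    (hA : ∀ v, I • (A *ᵥ vecConj v) + J (A *ᵥ vecConj v) = I • v - J v)
    (L : ℂ →ₗ[ℝ] (Fin n → ℂ)) :
    (∀ w, L (I * w) = J (L w)) ↔ L 1 + I • L I = A *ᵥ vecConj (L 1 - I • L I) := by
  have key X Y : Y = J X ↔ X + I • Y = A *ᵥ vecConj (X - I • Y) :=
    eq_apply_iff_add_I_smul_eq J hinj (hA _)
  rw [forall_apply_I_mul_iff, key, key, add_I_smul_eq_mulVec_vecConj_rotate, and_self]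

noncomputable def vecConjCLE (n : ℕ) : (Fin n → ℂ) ≃L[ℝ] (Fin n → ℂ) :=
  ContinuousLinearEquiv.piCongrRight fun _ => Complex.conjCLE

theorem dbar_vecConj (z : ℂ → Fin n → ℂ) (ζ : ℂ) :
    dbar (fun ω => vecConj (z ω)) ζ =
      (1 / 2 : ℂ) • vecConj (fderiv ℝ z ζ 1 - I • fderiv ℝ z ζ I) := by
  -- `comp_fderiv` for an equivalence needs no differentiability: off the differentiable
  -- points both derivatives are the junk value `0`.
  have hderiv : fderiv ℝ (fun ω => vecConj (z ω)) ζ =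
      (vecConjCLE n : _ →L[ℝ] _).comp (fderiv ℝ z ζ) :=
    (vecConjCLE n).comp_fderiv
  funext j
  simp [dbar, hderiv, vecConjCLE, vecConj]

end

theorem stmt4_general (n : ℕ) (Ω : Set (Fin n → ℂ))
    (J : (Fin n → ℂ) → ((Fin n → ℂ) →ₗ[ℝ] (Fin n → ℂ)))
    (hJdet : ∀ w ∈ Ω, LinearMap.det
      ((LinearMap.lsmul ℂ (Fin n → ℂ) Complex.I).restrictScalars ℝ + J w) ≠ 0)
    (A : (Fin n → ℂ) → Matrix (Fin n) (Fin n) ℂ)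
    (hA : ∀ w ∈ Ω, ∀ v : Fin n → ℂ,
      Complex.I • (A w *ᵥ vecConj v) + J w (A w *ᵥ vecConj v) = Complex.I • v - J w v)
    (z : ℂ → (Fin n → ℂ))
    (hrange : ∀ ζ ∈ Metric.ball (0 : ℂ) 1, z ζ ∈ Ω) :
    (∀ ζ ∈ Metric.ball (0 : ℂ) 1, ∀ w : ℂ,
        fderiv ℝ z ζ (Complex.I * w) = J (z ζ) (fderiv ℝ z ζ w)) ↔
      (∀ ζ ∈ Metric.ball (0 : ℂ) 1,
        dbar z ζ = A (z ζ) *ᵥ dbar (fun ω => vecConj (z ω)) ζ) := by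
  refine forall₂_congr fun ζ hζ => ?_
  have hinj : Function.Injective fun t => I • t + J (z ζ) t :=
    (LinearMap.equivOfDetNeZero _ (hJdet _ (hrange ζ hζ))).injective
  rw [dbar_vecConj, dbar, mulVec_smul, smul_right_inj (by norm_num)]
  exact forall_apply_I_mul_iff_add_I_smul_eq (J (z ζ)) hinj (A (z ζ)) (hA _ (hrange ζ hζ))
    (fderiv ℝ z ζ : ℂ →ₗ[ℝ] (Fin n → ℂ))

/-- a differentiable map `z : D → Ω` satisfies `dz ∘ J_st = J(z) ∘ dz`
iff it satisfies the Cauchy–Riemann equations `z_ζ̄ = A(z) conj(z)_ζ̄`, where `A` is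
the complex matrix of the almost complex structure `J` on `Ω`. -/
theorem stmt4 (n : ℕ) (Ω : Set (Fin n → ℂ)) (hΩ : IsOpen Ω)
    (J : (Fin n → ℂ) → ((Fin n → ℂ) →ₗ[ℝ] (Fin n → ℂ)))
    (hJsq : ∀ w ∈ Ω, (J w) ∘ₗ (J w) = -LinearMap.id)
    (hJdet : ∀ w ∈ Ω, LinearMap.det
      ((LinearMap.lsmul ℂ (Fin n → ℂ) Complex.I).restrictScalars ℝ + J w) ≠ 0)
    (A : (Fin n → ℂ) → Matrix (Fin n) (Fin n) ℂ)
    (hA : ∀ w ∈ Ω, ∀ v : Fin n → ℂ,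
      Complex.I • (A w *ᵥ vecConj v) + J w (A w *ᵥ vecConj v) = Complex.I • v - J w v)
    (z : ℂ → (Fin n → ℂ))
    (hz : ∀ ζ ∈ Metric.ball (0 : ℂ) 1, DifferentiableAt ℝ z ζ)
    (hrange : ∀ ζ ∈ Metric.ball (0 : ℂ) 1, z ζ ∈ Ω) :
    (∀ ζ ∈ Metric.ball (0 : ℂ) 1, ∀ w : ℂ,
        fderiv ℝ z ζ (Complex.I * w) = J (z ζ) (fderiv ℝ z ζ w)) ↔
      (∀ ζ ∈ Metric.ball (0 : ℂ) 1,
        dbar z ζ = A (z ζ) *ᵥ dbar (fun ω => vecConj (z ω)) ζ) :=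
  stmt4_general n Ω J hJdet A hA z hrange
end
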